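/- arXiv:2210.01989 — 4 statements merged into one kernel-verified Lean document; each statement's English description precedes it below -/
import Mathlib

section
/- Let d be a natural number and let μ be the standard Gaussian measure on ℝ^d. For all x, y ∈ ℝ^d, the FAVOR+ single-feature estimator is unbiased for the softmax kernel: ∫ exp(−‖x‖²/2 − ‖y‖²/2) · exp(⟨w, x + y⟩) dμ(w) = exp(⟨x, y⟩). -/
open scoped NNReal ENNReal

open MeasureTheory ProbabilityTheory Real

lemma integral_exp_mul_gaussianReal (c : ℝ) :
    ∫ w, Real.exp (c * w) ∂(gaussianReal 0 1) = Real.exp (c ^ 2 / 2) := by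
  rw [gaussianReal_of_var_ne_zero 0 one_ne_zero]
  have hd : gaussianPDF 0 1 = fun x => (((gaussianPDFReal 0 1 x).toNNReal : ℝ≥0) : ℝ≥0∞) := by
    ext x
    simp [gaussianPDF, ENNReal.ofReal]
  rw [hd, integral_withDensity_eq_integral_smul
    (by exact (measurable_gaussianPDFReal 0 1).real_toNNReal)]
  have hpdf : ∀ w : ℝ, ((gaussianPDFReal 0 1 w).toNNReal : ℝ≥0) • Real.exp (c * w)
      = (Real.sqrt (2 * π))⁻¹ * (Real.exp (c ^ 2 / 2) * Real.exp (-(w - c) ^ 2 / 2)) := by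
    intro w
    rw [NNReal.smul_def, smul_eq_mul,
      Real.coe_toNNReal _ (gaussianPDFReal_nonneg 0 1 w)]
    simp only [gaussianPDFReal, NNReal.coe_one, mul_one, sub_zero]
    rw [mul_assoc, ← Real.exp_add, ← Real.exp_add]
    ring_nf
  simp_rw [hpdf]
  rw [integral_const_mul, integral_const_mul,
    integral_sub_right_eq_self (fun a => Real.exp (-a ^ 2 / 2)) c]
  have : ∫ (a : ℝ), Real.exp (-a ^ 2 / 2) = Real.sqrt (2 * π) := by
    have h := integral_gaussian (1/2 : ℝ)
    simp_rw [show ∀ a : ℝ, -(1/2 : ℝ) * a ^ 2 = -a ^ 2 / 2 by intro a; ring] at h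
    rw [h, show π / (1/2 : ℝ) = 2 * π by ring]
  rw [this]
  have hne : Real.sqrt (2 * π) ≠ 0 :=
    ne_of_gt (Real.sqrt_pos.mpr (by positivity))
  field_simp

theorem favorPlus_unbiased (d : ℕ)
    (μ : Measure (Fin d → ℝ))
    (hμ : μ = Measure.pi fun _ : Fin d => gaussianReal 0 1)
    (x y : Fin d → ℝ) :
    ∫ w, Real.exp (-(∑ i, x i ^ 2) / 2 - (∑ i, y i ^ 2) / 2) *
        Real.exp (∑ i, w i * (x i + y i)) ∂μ
      = Real.exp (∑ i, x i * y i) := by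
  subst hμ
  letI : MeasureSpace ℝ := ⟨gaussianReal 0 1⟩
  haveI : IsProbabilityMeasure (volume : Measure ℝ) := by
    show IsProbabilityMeasure (gaussianReal 0 1); infer_instance
  haveI : SigmaFinite (volume : Measure ℝ) := inferInstance
  have hvol : (Measure.pi fun _ : Fin d => gaussianReal 0 1)
      = (volume : Measure (Fin d → ℝ)) := rfl
  rw [hvol, integral_const_mul]
  have hprod : ∀ w : Fin d → ℝ, Real.exp (∑ i, w i * (x i + y i))
      = ∏ i, Real.exp ((x i + y i) * w i) := by
    intro w
    rw [Real.exp_sum]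
    exact Finset.prod_congr rfl fun i _ => by rw [mul_comm]
  simp_rw [hprod]
  rw [show (∫ a : Fin d → ℝ, ∏ i, Real.exp ((x i + y i) * a i)) = ∏ i, ∫ w : ℝ, Real.exp ((x i + y i) * w) from
    integral_fintype_prod_eq_prod (fun i (w : ℝ) => Real.exp ((x i + y i) * w))]
  have hmgf : ∀ i : Fin d, (∫ w : ℝ, Real.exp ((x i + y i) * w))
      = Real.exp ((x i + y i) ^ 2 / 2) := fun i =>
    integral_exp_mul_gaussianReal (x i + y i)
  simp_rw [hmgf, ← Real.exp_sum, ← Real.exp_add]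
  congr 1
  have h1 : ∑ i, (x i + y i) ^ 2 / 2
      = ((∑ i, x i ^ 2) / 2 + (∑ i, y i ^ 2) / 2) + ∑ i, x i * y i := by
    rw [Finset.sum_congr rfl
      (fun i (_ : i ∈ Finset.univ) => by ring :
        ∀ i ∈ Finset.univ, (x i + y i) ^ 2 / 2 = (x i ^ 2 / 2 + y i ^ 2 / 2) + x i * y i),
      Finset.sum_add_distrib, Finset.sum_add_distrib, ← Finset.sum_div, ← Finset.sum_div]
  rw [h1]
  ring
end

section
/- Let d be a natural number and let μ be the standard Gaussian measure on ℝ^d. For all x, y ∈ ℝ^d, the variance of the FAVOR+ single-feature estimator equals exp(2⟨x, y⟩)·(exp(‖x + y‖²) − 1); that is, ∫ (exp(−‖x‖²/2 − ‖y‖²/2) · exp(⟨w, x + y⟩) − exp(⟨x, y⟩))² dμ(w) = exp(2⟨x, y⟩)·(exp(‖x + y‖²) − 1). -/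
open MeasureTheory ProbabilityTheory Real
open scoped ENNReal NNReal

lemma integrable_exp_mul_gauss (c : ℝ) :
    Integrable (fun t : ℝ => Real.exp (t * c)) (gaussianReal 0 1) := by
  rw [gaussianReal_of_var_ne_zero _ one_ne_zero]
  rw [gaussianPDF_def]
  have hmeas : Measurable fun x : ℝ => (gaussianPDFReal 0 1 x).toNNReal :=
    (measurable_gaussianPDFReal 0 1).real_toNNReal
  have : (fun x : ℝ => ENNReal.ofReal (gaussianPDFReal 0 1 x))
      = fun x : ℝ => ((gaussianPDFReal 0 1 x).toNNReal : ℝ≥0∞) := rfl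
  rw [this, integrable_withDensity_iff_integrable_smul hmeas]
  have heq : ∀ x : ℝ, ((gaussianPDFReal 0 1 x).toNNReal : ℝ) • Real.exp (x * c)
      = Real.exp (c^2/2) * ((Real.sqrt (2*Real.pi))⁻¹ * Real.exp (-(1/2) * (x - c)^2)) := by
    intro x
    rw [smul_eq_mul, Real.coe_toNNReal _ (gaussianPDFReal_nonneg 0 1 x)]
    rw [gaussianPDFReal]
    norm_num
    rw [mul_assoc, ← Real.exp_add, mul_left_comm, ← Real.exp_add]
    congr 2
    ring
  simp only [NNReal.smul_def, smul_eq_mul] at heq ⊢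
  simp only [heq]
  exact (((integrable_exp_neg_mul_sq (by norm_num : (0:ℝ) < 1/2)).comp_sub_right
    c).const_mul _).const_mul _

lemma integral_exp_mul_gauss (c : ℝ) :
    ∫ t, Real.exp (t * c) ∂(gaussianReal 0 1) = Real.exp (c^2/2) := by
  rw [gaussianReal_of_var_ne_zero _ one_ne_zero, gaussianPDF_def]
  have hmeas : Measurable fun x : ℝ => (gaussianPDFReal 0 1 x).toNNReal :=
    (measurable_gaussianPDFReal 0 1).real_toNNReal
  have h0 : (fun x : ℝ => ENNReal.ofReal (gaussianPDFReal 0 1 x))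
      = fun x : ℝ => ((gaussianPDFReal 0 1 x).toNNReal : ℝ≥0∞) := rfl
  rw [h0, integral_withDensity_eq_integral_smul hmeas]
  have heq : ∀ x : ℝ, ((gaussianPDFReal 0 1 x).toNNReal : ℝ) • Real.exp (x * c)
      = Real.exp (c^2/2) * ((Real.sqrt (2*Real.pi))⁻¹ * Real.exp (-(1/2) * (x - c)^2)) := by
    intro x
    rw [smul_eq_mul, Real.coe_toNNReal _ (gaussianPDFReal_nonneg 0 1 x)]
    rw [gaussianPDFReal]
    norm_num
    rw [mul_assoc, ← Real.exp_add, mul_left_comm, ← Real.exp_add]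
    congr 2
    ring
  simp only [NNReal.smul_def, smul_eq_mul] at heq ⊢
  simp only [heq]
  rw [integral_const_mul, integral_const_mul]
  have : ∫ x : ℝ, Real.exp (-(1/2) * (x - c)^2) = ∫ x : ℝ, Real.exp (-(1/2) * x^2) :=
    integral_sub_right_eq_self (fun x => Real.exp (-(1/2) * x^2)) c
  rw [this, integral_gaussian]
  rw [show Real.pi / (1/2) = 2 * Real.pi by ring]
  rw [inv_mul_cancel₀ (Real.sqrt_ne_zero'.mpr (by positivity)), mul_one]

lemma pi_integrable_exp (d : ℕ) (c : Fin d → ℝ) :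
    Integrable (fun w : Fin d → ℝ => Real.exp (∑ i, w i * c i))
      (Measure.pi fun _ => gaussianReal 0 1) := by
  letI : MeasureSpace ℝ := ⟨gaussianReal 0 1⟩
  haveI : SigmaFinite (volume : Measure ℝ) :=
    inferInstanceAs (SigmaFinite (gaussianReal 0 1))
  simp_rw [Real.exp_sum]
  exact Integrable.fintype_prod (f := fun i t => Real.exp (t * c i))
    (fun i => integrable_exp_mul_gauss (c i))

lemma pi_integral_exp (d : ℕ) (c : Fin d → ℝ) :
    ∫ w, Real.exp (∑ i, w i * c i) ∂(Measure.pi fun _ : Fin d => gaussianReal 0 1)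
      = Real.exp ((∑ i, c i ^ 2) / 2) := by
  letI : MeasureSpace ℝ := ⟨gaussianReal 0 1⟩
  haveI : SigmaFinite (volume : Measure ℝ) :=
    inferInstanceAs (SigmaFinite (gaussianReal 0 1))
  simp_rw [Real.exp_sum]
  rw [show (Measure.pi fun _ : Fin d => gaussianReal 0 1) = (volume : Measure (Fin d → ℝ)) from rfl]
  erw [integral_fintype_prod_eq_prod (μ := fun _ => (volume : Measure ℝ)) (fun i t => Real.exp (t * c i))]
  simp_rw [show ∀ i, ∫ t : ℝ, Real.exp (t * c i) = Real.exp ((c i)^2/2) from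
    fun i => integral_exp_mul_gauss (c i)]
  rw [← Real.exp_sum, Finset.sum_div]

theorem favorPlus_variance (d : ℕ)
    (μ : Measure (Fin d → ℝ))
    (hμ : μ = Measure.pi fun _ : Fin d => gaussianReal 0 1)
    (x y : Fin d → ℝ) :
    ∫ w, (Real.exp (-(∑ i, x i ^ 2) / 2 - (∑ i, y i ^ 2) / 2) *
            Real.exp (∑ i, w i * (x i + y i))
          - Real.exp (∑ i, x i * y i)) ^ 2 ∂μ
      = Real.exp (2 * ∑ i, x i * y i) *
          (Real.exp (∑ i, (x i + y i) ^ 2) - 1) := by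
  subst hμ
  set ν : Measure (Fin d → ℝ) := Measure.pi fun _ : Fin d => gaussianReal 0 1 with hν
  haveI : IsProbabilityMeasure ν := by rw [hν]; infer_instance
  set a : ℝ := Real.exp (-(∑ i, x i ^ 2) / 2 - (∑ i, y i ^ 2) / 2) with ha
  set b : ℝ := Real.exp (∑ i, x i * y i) with hb
  have key : ∀ w : Fin d → ℝ,
      (a * Real.exp (∑ i, w i * (x i + y i)) - b) ^ 2
        = a ^ 2 * Real.exp (∑ i, w i * (2 * (x i + y i)))
          - (2 * a * b) * Real.exp (∑ i, w i * (x i + y i)) + b ^ 2 := by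
    intro w
    have h2 : (∑ i, w i * (2 * (x i + y i))) = (∑ i, w i * (x i + y i)) + ∑ i, w i * (x i + y i) :=
      by rw [← two_mul, Finset.mul_sum]; exact Finset.sum_congr rfl fun i _ => by ring
    rw [h2, Real.exp_add]
    ring
  simp only [key]
  have h1 : Integrable (fun w : Fin d → ℝ =>
      a ^ 2 * Real.exp (∑ i, w i * (2 * (x i + y i)))) ν :=
    (pi_integrable_exp d fun i => 2 * (x i + y i)).const_mul _
  have h2 : Integrable (fun w : Fin d → ℝ =>
      (2 * a * b) * Real.exp (∑ i, w i * (x i + y i))) ν :=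
    (pi_integrable_exp d fun i => x i + y i).const_mul _
  have h12 : Integrable (fun w : Fin d → ℝ =>
      a ^ 2 * Real.exp (∑ i, w i * (2 * (x i + y i)))
        - (2 * a * b) * Real.exp (∑ i, w i * (x i + y i))) ν := h1.sub h2
  rw [integral_add h12 (integrable_const _), integral_sub h1 h2,
    integral_const_mul, integral_const_mul, integral_const, probReal_univ]
  rw [pi_integral_exp, pi_integral_exp]
  have hQ : (∑ i, (x i + y i) ^ 2)
      = (∑ i, x i ^ 2) + 2 * (∑ i, x i * y i) + (∑ i, y i ^ 2) := by
    rw [Finset.mul_sum, ← Finset.sum_add_distrib, ← Finset.sum_add_distrib]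
    exact Finset.sum_congr rfl fun i _ => by ring
  have h2Q : (∑ i, (2 * (x i + y i)) ^ 2) = 4 * ∑ i, (x i + y i) ^ 2 := by
    rw [Finset.mul_sum]; exact Finset.sum_congr rfl fun i _ => by ring
  rw [h2Q, hQ, ha, hb]
  simp only [ENNReal.toReal_one, smul_eq_mul, mul_one]
  generalize (∑ i, x i * y i) = P
  generalize (∑ i, x i ^ 2) = X
  generalize (∑ i, y i ^ 2) = Y
  simp only [pow_two, mul_assoc, ← Real.exp_add, mul_sub, mul_one]
  ring_nf
end

section
/- Let d, m be natural numbers with m ≥ 1, and let ν be the product over Fin m of the standard Gaussian measure on ℝ^d (so a sample is an m-tuple (w_1, …, w_m) of independent standard Gaussian vectors in ℝ^d). For all x, y ∈ ℝ^d, the mean-squared error of the m-feature FAVOR+ estimator of the softmax kernel satisfies: ∫ ( (1/m) Σ_{i=1}^m exp(−‖x‖²/2 − ‖y‖²/2) · exp(⟨w_i, x + y⟩) − exp(⟨x, y⟩) )² dν(w) = (1/m) · exp(‖x + y‖²) · exp(2⟨x, y⟩) · (1 − exp(−‖x + y‖²)). -/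
open MeasureTheory ProbabilityTheory Real

lemma quad_integrable (a : ℝ) : Integrable (fun x : ℝ => rexp (-(1/2) * x ^ 2 + x * a)) := by
  have h := (integrable_cexp_quadratic (b := 1/2) (by norm_num) a 0).re
  refine h.congr (Filter.Eventually.of_forall fun v => ?_)
  have : (-(1/2 : ℂ) * v ^ 2 + a * v + 0) = ((-(1/2) * v ^ 2 + v * a : ℝ) : ℂ) := by
    push_cast; ring
  simp only [this]; exact Complex.exp_ofReal_re _

lemma quad_integral (a : ℝ) :
    ∫ x : ℝ, rexp (-(1/2) * x ^ 2 + x * a) = Real.sqrt (2 * π) * rexp (a ^ 2 / 2) := by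
  have h := integral_cexp_quadratic (b := -(1/2)) (by norm_num) a 0
  have h2 : ∫ x : ℝ, Complex.exp (-(1/2 : ℂ) * x ^ 2 + a * x + 0)
      = ((∫ x : ℝ, rexp (-(1/2) * x ^ 2 + x * a) : ℝ) : ℂ) := by
    rw [show (fun x : ℝ => Complex.exp (-(1/2 : ℂ) * x ^ 2 + a * x + 0))
        = fun x : ℝ => ((rexp (-(1/2) * x ^ 2 + x * a) : ℝ) : ℂ) from funext fun v => by
          rw [show (-(1/2 : ℂ) * v ^ 2 + a * v + 0) = ((-(1/2) * v ^ 2 + v * a : ℝ) : ℂ) by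
            push_cast; ring, ← Complex.ofReal_exp]]
    exact integral_ofReal
  rw [h2] at h
  have h3 : ((Real.pi : ℂ) / -(-(1/2 : ℂ))) ^ (1/2 : ℂ) = ((Real.sqrt (2*π) : ℝ) : ℂ) := by
    rw [show ((Real.pi : ℂ) / -(-(1/2 : ℂ))) = ((2*π : ℝ) : ℂ) by push_cast; ring,
      show (1/2 : ℂ) = ((1/2 : ℝ) : ℂ) by norm_num,
      ← Complex.ofReal_cpow (by positivity), Real.sqrt_eq_rpow]
  rw [h3] at h
  apply Complex.ofReal_injective
  rw [h, show ((0:ℂ) - a^2/(4 * -(1/2))) = ((a^2/2 : ℝ) : ℂ) by push_cast; ring,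
    ← Complex.ofReal_exp]
  push_cast
  ring

lemma gauss_pdf_smul (a : ℝ) (x : ℝ) :
    (gaussianPDFReal 0 1 x).toNNReal • rexp (x * a)
      = (Real.sqrt (2 * π))⁻¹ * rexp (-(1/2) * x ^ 2 + x * a) := by
  rw [NNReal.smul_def, Real.coe_toNNReal _ (gaussianPDFReal_nonneg 0 1 x)]
  simp only [gaussianPDFReal, NNReal.coe_one, mul_one, sub_zero, smul_eq_mul]
  rw [mul_assoc, ← Real.exp_add]
  ring_nf

lemma gauss_meas : Measurable fun x : ℝ => (gaussianPDFReal 0 1 x).toNNReal :=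
  (measurable_gaussianPDFReal 0 1).real_toNNReal

lemma gauss_wd : gaussianReal 0 1 = volume.withDensity
    fun x => ((gaussianPDFReal 0 1 x).toNNReal : ENNReal) := by
  rw [gaussianReal_of_var_ne_zero 0 one_ne_zero]
  rfl

lemma gauss_exp_integrable (a : ℝ) :
    Integrable (fun x : ℝ => rexp (x * a)) (gaussianReal 0 1) := by
  rw [gauss_wd, integrable_withDensity_iff_integrable_smul gauss_meas]
  have h := (quad_integrable a).const_mul (Real.sqrt (2 * π))⁻¹
  exact h.congr (Filter.Eventually.of_forall fun x => (gauss_pdf_smul a x).symm)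

lemma gauss_exp_integral (a : ℝ) :
    ∫ x, rexp (x * a) ∂(gaussianReal 0 1) = rexp (a ^ 2 / 2) := by
  rw [gauss_wd, integral_withDensity_eq_integral_smul gauss_meas]
  rw [integral_congr_ae (Filter.Eventually.of_forall fun x => gauss_pdf_smul a x),
    integral_const_mul, quad_integral]
  rw [← mul_assoc, inv_mul_cancel₀ (by positivity), one_mul]
variable {d m : ℕ}


lemma pi_integral {ι : Type*} [Fintype ι] {E : Type*} [MeasurableSpace E] (μ : Measure E)
    [SigmaFinite μ] (f : ι → E → ℝ) :
    ∫ x : ι → E, ∏ i, f i (x i) ∂(Measure.pi fun _ => μ) = ∏ i, ∫ x, f i x ∂μ := by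
  letI : MeasureSpace E := ⟨μ⟩
  exact integral_fintype_prod_eq_prod f

lemma pi_integrable {ι : Type*} [Fintype ι] {E : Type*} [MeasurableSpace E] (μ : Measure E)
    [SigmaFinite μ] {f : ι → E → ℝ} (hf : ∀ i, Integrable (f i) μ) :
    Integrable (fun x : ι → E => ∏ i, f i (x i)) (Measure.pi fun _ => μ) := by
  letI : MeasureSpace E := ⟨μ⟩
  exact Integrable.fintype_prod hf

lemma mgf_d_integrable (z : Fin d → ℝ) :
    Integrable (fun v : Fin d → ℝ => rexp (∑ k, v k * z k))
      (Measure.pi fun _ : Fin d => gaussianReal 0 1) := by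
  have h := pi_integrable (ι := Fin d) (gaussianReal 0 1)
    (f := fun k (s : ℝ) => rexp (s * z k)) (fun k => gauss_exp_integrable (z k))
  exact h.congr (Filter.Eventually.of_forall fun v => (Real.exp_sum _ _).symm)

lemma mgf_d_integral (z : Fin d → ℝ) :
    ∫ v, rexp (∑ k, v k * z k) ∂(Measure.pi fun _ : Fin d => gaussianReal 0 1)
      = rexp ((∑ k, z k ^ 2) / 2) := by
  rw [integral_congr_ae (Filter.Eventually.of_forall fun v : Fin d → ℝ =>
      (Real.exp_sum Finset.univ (fun k => v k * z k))),
    pi_integral (gaussianReal 0 1) (fun k (s : ℝ) => rexp (s * z k))]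
  simp_rw [gauss_exp_integral, ← Real.exp_sum, Finset.sum_div]

lemma inner_rw (z : Fin d → ℝ) (e : Fin m → ℝ) (w : Fin m → Fin d → ℝ) :
    ∀ l, ∑ k, w l k * (e l * z k) = e l * ∑ k, w l k * z k := by
  intro l
  rw [Finset.mul_sum]
  exact Finset.sum_congr rfl fun k _ => by ring

lemma mgf_m_integrable (z : Fin d → ℝ) (e : Fin m → ℝ) :
    Integrable (fun w : Fin m → Fin d → ℝ => rexp (∑ l, e l * ∑ k, w l k * z k))
      (Measure.pi fun _ : Fin m => Measure.pi fun _ : Fin d => gaussianReal 0 1) := by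
  have h := pi_integrable (ι := Fin m) (Measure.pi fun _ : Fin d => gaussianReal 0 1)
    (f := fun l (v : Fin d → ℝ) => rexp (∑ k, v k * (e l * z k)))
    (fun l => mgf_d_integrable _)
  refine h.congr (Filter.Eventually.of_forall fun w => ?_)
  simp only []
  rw [← Real.exp_sum]
  congr 1
  exact Finset.sum_congr rfl fun l _ => inner_rw z e w l

lemma mgf_m_integral (z : Fin d → ℝ) (e : Fin m → ℝ) :
    ∫ w, rexp (∑ l, e l * ∑ k, w l k * z k)
      ∂(Measure.pi fun _ : Fin m => Measure.pi fun _ : Fin d => gaussianReal 0 1)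
      = rexp ((∑ l, e l ^ 2) * (∑ k, z k ^ 2) / 2) := by
  have hpt : ∀ w : Fin m → Fin d → ℝ, rexp (∑ l, e l * ∑ k, w l k * z k)
      = ∏ l, rexp (∑ k, w l k * (e l * z k)) := by
    intro w
    rw [← Real.exp_sum]
    congr 1
    exact (Finset.sum_congr rfl fun l _ => inner_rw z e w l).symm
  rw [integral_congr_ae (Filter.Eventually.of_forall hpt),
    pi_integral (Measure.pi fun _ : Fin d => gaussianReal 0 1)
      (fun l (v : Fin d → ℝ) => rexp (∑ k, v k * (e l * z k)))]
  simp_rw [mgf_d_integral, ← Real.exp_sum]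
  congr 1
  rw [Finset.sum_mul, Finset.sum_div]
  refine Finset.sum_congr rfl fun l _ => ?_
  congr 1
  rw [Finset.mul_sum]
  exact Finset.sum_congr rfl fun k _ => by ring

lemma single_sum (z : Fin d → ℝ) (i : Fin m) (w : Fin m → Fin d → ℝ) :
    ∑ l, (if l = i then (1:ℝ) else 0) * (∑ k, w l k * z k) = ∑ k, w i k * z k := by
  simp [ite_mul, Finset.sum_ite_eq']

lemma pair_sum (z : Fin d → ℝ) (i j : Fin m) (w : Fin m → Fin d → ℝ) :
    ∑ l, ((if l = i then (1:ℝ) else 0) + (if l = j then 1 else 0)) * (∑ k, w l k * z k)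
      = (∑ k, w i k * z k) + ∑ k, w j k * z k := by
  simp [add_mul, Finset.sum_add_distrib, ite_mul, Finset.sum_ite_eq']

lemma single_sq (i : Fin m) : ∑ l, (if l = i then (1:ℝ) else 0) ^ 2 = 1 := by
  have h : ∀ l, (if l = i then (1:ℝ) else 0) ^ 2 = if l = i then 1 else 0 := fun l => by
    split <;> norm_num
  simp [h, Finset.sum_ite_eq']

lemma pair_sq (i j : Fin m) :
    ∑ l, ((if l = i then (1:ℝ) else 0) + (if l = j then 1 else 0)) ^ 2
      = if i = j then 4 else 2 := by
  rcases eq_or_ne i j with rfl | hij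
  · have h : ∀ l, ((if l = i then (1:ℝ) else 0) + (if l = i then 1 else 0)) ^ 2
        = if l = i then 4 else 0 := fun l => by split <;> norm_num
    simp [h, Finset.sum_ite_eq']
  · have h : ∀ l, ((if l = i then (1:ℝ) else 0) + (if l = j then 1 else 0)) ^ 2
        = (if l = i then 1 else 0) + (if l = j then 1 else 0) := fun l => by
      split_ifs with h1 h2 <;> try norm_num
      exact absurd (h1.symm.trans h2) hij
    rw [if_neg hij]
    simp [h, Finset.sum_add_distrib, Finset.sum_ite_eq']
    norm_num

lemma S_integrable (z : Fin d → ℝ) (i : Fin m) :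
    Integrable (fun w : Fin m → Fin d → ℝ => rexp (∑ k, w i k * z k))
      (Measure.pi fun _ : Fin m => Measure.pi fun _ : Fin d => gaussianReal 0 1) :=
  (mgf_m_integrable z fun l => if l = i then 1 else 0).congr
    (Filter.Eventually.of_forall fun w => congrArg rexp (single_sum z i w))

lemma S_integral (z : Fin d → ℝ) (i : Fin m) :
    ∫ w, rexp (∑ k, w i k * z k)
      ∂(Measure.pi fun _ : Fin m => Measure.pi fun _ : Fin d => gaussianReal 0 1)
      = rexp ((∑ k, z k ^ 2) / 2) := by
  rw [← integral_congr_ae (Filter.Eventually.of_forall fun w =>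
        congrArg rexp (single_sum z i w)),
    mgf_m_integral, single_sq, one_mul]

lemma pair_integrable (z : Fin d → ℝ) (i j : Fin m) :
    Integrable (fun w : Fin m → Fin d → ℝ =>
        rexp (∑ k, w i k * z k) * rexp (∑ k, w j k * z k))
      (Measure.pi fun _ : Fin m => Measure.pi fun _ : Fin d => gaussianReal 0 1) := by
  refine (mgf_m_integrable z fun l => (if l = i then 1 else 0) + (if l = j then 1 else 0)).congr
    (Filter.Eventually.of_forall fun w => ?_)
  simp only []
  rw [pair_sum z i j w, Real.exp_add]

lemma pair_integral (z : Fin d → ℝ) (i j : Fin m) :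
    ∫ w, rexp (∑ k, w i k * z k) * rexp (∑ k, w j k * z k)
      ∂(Measure.pi fun _ : Fin m => Measure.pi fun _ : Fin d => gaussianReal 0 1)
      = if i = j then rexp (2 * ∑ k, z k ^ 2) else rexp (∑ k, z k ^ 2) := by
  have hw : ∀ w : Fin m → Fin d → ℝ,
      rexp (∑ l, ((if l = i then (1:ℝ) else 0) + (if l = j then 1 else 0)) *
          (∑ k, w l k * z k))
        = rexp (∑ k, w i k * z k) * rexp (∑ k, w j k * z k) := fun w => by
    rw [pair_sum z i j w, Real.exp_add]
  rw [← integral_congr_ae (Filter.Eventually.of_forall hw), mgf_m_integral, pair_sq]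
  rcases eq_or_ne i j with rfl | hij
  · rw [if_pos rfl, if_pos rfl]
    congr 1; ring
  · rw [if_neg hij, if_neg hij]
    congr 1; ring

theorem favorPlus_mse (d m : ℕ) (hm : 1 ≤ m)
    (ν : Measure (Fin m → Fin d → ℝ))
    (hν : ν = Measure.pi fun _ : Fin m => Measure.pi fun _ : Fin d => gaussianReal 0 1)
    (x y : Fin d → ℝ) :
    ∫ w, ((1 / (m : ℝ)) * ∑ i : Fin m,
            Real.exp (-(∑ k, x k ^ 2) / 2 - (∑ k, y k ^ 2) / 2) *
              Real.exp (∑ k, w i k * (x k + y k))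
          - Real.exp (∑ k, x k * y k)) ^ 2 ∂ν
      = (1 / (m : ℝ)) * Real.exp (∑ k, (x k + y k) ^ 2) *
          Real.exp (2 * ∑ k, x k * y k) *
          (1 - Real.exp (-(∑ k, (x k + y k) ^ 2))) := by
  subst hν
  set ν : Measure (Fin m → Fin d → ℝ) :=
    Measure.pi fun _ : Fin m => Measure.pi fun _ : Fin d => gaussianReal 0 1 with hν
  have hm0 : (m : ℝ) ≠ 0 := Nat.cast_ne_zero.mpr (by omega)
  set t := ∑ k, (x k + y k) ^ 2 with ht
  set p := ∑ k, x k * y k with hp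
  set c := rexp (-(∑ k, x k ^ 2) / 2 - (∑ k, y k ^ 2) / 2) with hc
  -- integrability facts instantiated at z = fun k => x k + y k
  have hPint : ∀ i j : Fin m, Integrable (fun w : Fin m → Fin d → ℝ =>
      rexp (∑ k, w i k * (x k + y k)) * rexp (∑ k, w j k * (x k + y k))) ν :=
    fun i j => pair_integrable (fun k => x k + y k) i j
  have hSint : ∀ i : Fin m, Integrable
      (fun w : Fin m → Fin d → ℝ => rexp (∑ k, w i k * (x k + y k))) ν :=
    fun i => S_integrable (fun k => x k + y k) i
  have hPval : ∀ i j : Fin m, ∫ w, rexp (∑ k, w i k * (x k + y k)) *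
        rexp (∑ k, w j k * (x k + y k)) ∂ν
      = if i = j then rexp (2 * t) else rexp t :=
    fun i j => pair_integral (fun k => x k + y k) i j
  have hSval : ∀ i : Fin m, ∫ w, rexp (∑ k, w i k * (x k + y k)) ∂ν = rexp (t / 2) :=
    fun i => S_integral (fun k => x k + y k) i
  -- pointwise expansion of the square
  have hpt : ∀ w : Fin m → Fin d → ℝ,
      ((1 / (m : ℝ)) * ∑ i : Fin m, c * rexp (∑ k, w i k * (x k + y k)) - rexp p) ^ 2
      = (1 / (m : ℝ)) ^ 2 * c ^ 2 *
          (∑ i : Fin m, ∑ j : Fin m,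
            rexp (∑ k, w i k * (x k + y k)) * rexp (∑ k, w j k * (x k + y k)))
        - 2 * (1 / (m : ℝ)) * rexp p * c * (∑ i : Fin m, rexp (∑ k, w i k * (x k + y k)))
        + rexp p ^ 2 := by
    intro w
    rw [← Finset.mul_sum, ← Finset.sum_mul_sum]
    ring
  rw [integral_congr_ae (Filter.Eventually.of_forall hpt)]
  have hF : Integrable (fun w : Fin m → Fin d → ℝ => ∑ i : Fin m, ∑ j : Fin m,
      rexp (∑ k, w i k * (x k + y k)) * rexp (∑ k, w j k * (x k + y k))) ν :=
    integrable_finset_sum _ fun i _ => integrable_finset_sum _ fun j _ => hPint i j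
  have hG : Integrable (fun w : Fin m → Fin d → ℝ =>
      ∑ i : Fin m, rexp (∑ k, w i k * (x k + y k))) ν :=
    integrable_finset_sum _ fun i _ => hSint i
  have hF1 : Integrable (fun w : Fin m → Fin d → ℝ =>
      (1 / (m : ℝ)) ^ 2 * c ^ 2 * (∑ i : Fin m, ∑ j : Fin m,
        rexp (∑ k, w i k * (x k + y k)) * rexp (∑ k, w j k * (x k + y k)))) ν :=
    hF.const_mul _
  have hG1 : Integrable (fun w : Fin m → Fin d → ℝ =>
      2 * (1 / (m : ℝ)) * rexp p * c *
        (∑ i : Fin m, rexp (∑ k, w i k * (x k + y k)))) ν :=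
    hG.const_mul _
  have hFG : Integrable (fun w : Fin m → Fin d → ℝ =>
      (1 / (m : ℝ)) ^ 2 * c ^ 2 * (∑ i : Fin m, ∑ j : Fin m,
        rexp (∑ k, w i k * (x k + y k)) * rexp (∑ k, w j k * (x k + y k)))
      - 2 * (1 / (m : ℝ)) * rexp p * c *
        (∑ i : Fin m, rexp (∑ k, w i k * (x k + y k)))) ν := hF1.sub hG1
  rw [integral_add hFG (integrable_const _),
    integral_sub hF1 hG1,
    integral_const_mul, integral_const_mul, integral_const]
  have hrow : ∀ i : Fin m, (∑ j : Fin m, if i = j then rexp (2 * t) else rexp t)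
      = rexp (2 * t) + ((m : ℝ) - 1) * rexp t := by
    intro i
    have h : ∀ j : Fin m, (if i = j then rexp (2 * t) else rexp t)
        = (if i = j then rexp (2 * t) - rexp t else 0) + rexp t := fun j => by
      split <;> ring
    simp_rw [h]
    rw [Finset.sum_add_distrib, Finset.sum_ite_eq, if_pos (Finset.mem_univ i),
      Finset.sum_const, Finset.card_univ, Fintype.card_fin, nsmul_eq_mul]
    ring
  have hFval : ∫ w, (∑ i : Fin m, ∑ j : Fin m,
        rexp (∑ k, w i k * (x k + y k)) * rexp (∑ k, w j k * (x k + y k))) ∂ν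
      = (m : ℝ) * (rexp (2 * t) + ((m : ℝ) - 1) * rexp t) := by
    rw [integral_finset_sum _ fun i _ => integrable_finset_sum _ fun j _ => hPint i j]
    have h : ∀ i ∈ Finset.univ, (∫ w, (∑ j : Fin m,
          rexp (∑ k, w i k * (x k + y k)) * rexp (∑ k, w j k * (x k + y k))) ∂ν)
        = rexp (2 * t) + ((m : ℝ) - 1) * rexp t := by
      intro i _
      rw [integral_finset_sum _ fun j _ => hPint i j, ← hrow i]
      exact Finset.sum_congr rfl fun j _ => hPval i j
    rw [Finset.sum_congr rfl h, Finset.sum_const, Finset.card_univ, Fintype.card_fin,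
      nsmul_eq_mul]
  have hGval : ∫ w, (∑ i : Fin m, rexp (∑ k, w i k * (x k + y k))) ∂ν
      = (m : ℝ) * rexp (t / 2) := by
    rw [integral_finset_sum _ fun i _ => hSint i, Finset.sum_congr rfl fun i _ => hSval i,
      Finset.sum_const, Finset.card_univ, Fintype.card_fin, nsmul_eq_mul]
  rw [hFval, hGval]
  simp only [measure_univ, probReal_univ, ENNReal.toReal_one, smul_eq_mul, one_mul]
  -- now pure algebra
  have hts : t = (∑ k, x k ^ 2) + 2 * p + ∑ k, y k ^ 2 := by
    rw [ht, hp, Finset.mul_sum, ← Finset.sum_add_distrib, ← Finset.sum_add_distrib]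
    exact Finset.sum_congr rfl fun k _ => by ring
  have hcq : c = rexp (p - t / 2) := by
    rw [hc]; congr 1; rw [hts]; ring
  have e1 : rexp t = rexp (t / 2) * rexp (t / 2) := by
    rw [← Real.exp_add]; congr 1; ring
  have e2 : rexp (2 * t) = rexp (t / 2) * rexp (t / 2) * rexp (t / 2) * rexp (t / 2) := by
    rw [← Real.exp_add, ← Real.exp_add, ← Real.exp_add]; congr 1; ring
  have e3 : rexp (p - t / 2) = rexp p / rexp (t / 2) := Real.exp_sub _ _
  have e4 : rexp (2 * p) = rexp p * rexp p := by
    rw [← Real.exp_add]; congr 1; ring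
  have e5 : rexp (-t) = 1 / (rexp (t / 2) * rexp (t / 2)) := by
    rw [Real.exp_neg, e1, one_div]
  have hu : rexp (t / 2) ≠ 0 := Real.exp_ne_zero _
  rw [hcq, e1, e2, e3, e4, e5]
  field_simp
  ring
end

section
/- Let ψ be the Haar mother wavelet and ψ_{i,j}(x) = 2^{i/2} · ψ(2^i x − j) for integers i, j. The family {ψ_{i,j} : i, j ∈ ℤ}, viewed as elements of the Hilbert space L²(ℝ) with Lebesgue measure, is total: the topological closure of its linear span is all of L²(ℝ). Together with orthonormality, it is a Hilbert (orthonormal) basis of L²(ℝ). -/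
open MeasureTheory Real Set

/-- The Haar mother wavelet. -/
noncomputable def haarMother (x : ℝ) : ℝ :=
  if 0 ≤ x ∧ x < 1 / 2 then 1 else if 1 / 2 ≤ x ∧ x < 1 then -1 else 0

/-- The dilated-translated Haar wavelet `ψ_{i,j}(x) = 2^{i/2} ψ(2^i x − j)`. -/
noncomputable def haarWavelet (i j : ℤ) (x : ℝ) : ℝ :=
  (2 : ℝ) ^ ((i : ℝ) / 2) * haarMother ((2 : ℝ) ^ i * x - (j : ℝ))

namespace HaarAux

/-- The dyadic interval `[k 2^{-n}, (k+1) 2^{-n})`. -/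
def D (n k : ℤ) : Set ℝ := Set.Ico ((k : ℝ) * 2 ^ (-n)) (((k : ℝ) + 1) * 2 ^ (-n))

lemma two_zpow_pos (n : ℤ) : (0:ℝ) < 2 ^ n := zpow_pos (by norm_num) n

lemma measurableSet_D (n k : ℤ) : MeasurableSet (D n k) := measurableSet_Ico

lemma volume_D (n k : ℤ) : volume (D n k) = ENNReal.ofReal ((2:ℝ) ^ (-n)) := by
  rw [D, Real.volume_Ico]; ring_nf

lemma volume_D_ne_top (n k : ℤ) : volume (D n k) ≠ ⊤ := by
  rw [volume_D]; exact ENNReal.ofReal_ne_top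

lemma mem_D_iff {n k : ℤ} {x : ℝ} : x ∈ D n k ↔ (k:ℝ) ≤ x * 2 ^ n ∧ x * 2 ^ n < (k:ℝ) + 1 := by
  have h2 : (0:ℝ) < 2 ^ n := two_zpow_pos n
  have e : ∀ y : ℝ, y * 2 ^ (-n) = y / 2 ^ n := fun y => by
    rw [zpow_neg]; ring
  rw [D, mem_Ico, e, e, div_le_iff₀ h2, lt_div_iff₀ h2]

lemma D_disjoint {n k k' : ℤ} (h : k ≠ k') : D n k ∩ D n k' = ∅ := by
  rw [eq_empty_iff_forall_notMem]
  rintro x ⟨h1, h2⟩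
  rw [mem_D_iff] at h1 h2
  apply h
  have a1 : (k:ℝ) < (k':ℝ) + 1 := lt_of_le_of_lt h1.1 h2.2
  have a2 : (k':ℝ) < (k:ℝ) + 1 := lt_of_le_of_lt h2.1 h1.2
  have b1 : k < k' + 1 := by exact_mod_cast a1
  have b2 : k' < k + 1 := by exact_mod_cast a2
  omega

lemma D_subset {n m : ℤ} (h : n ≤ m) (k : ℤ) :
    D m k ⊆ D n (k / 2 ^ (m - n).toNat) := by
  set t : ℕ := (m - n).toNat with ht
  set q : ℤ := 2 ^ t with hqdef
  have hq : (0:ℤ) < q := pow_pos (by norm_num) t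
  set l : ℤ := k / q with hl
  have hk1 : l * q ≤ k := Int.ediv_mul_le k (by positivity)
  have hk2 : k + 1 ≤ (l + 1) * q := by
    rw [Int.add_one_le_iff, hl]
    exact Int.lt_ediv_add_one_mul_self k hq
  have hqr : (q:ℝ) = (2:ℝ) ^ (m - n) := by
    have : ((m - n).toNat : ℤ) = m - n := Int.toNat_of_nonneg (by omega)
    rw [hqdef, ← this]
    push_cast
    rw [zpow_natCast]
  intro x hx
  rw [mem_D_iff] at hx ⊢
  have hpow : (0:ℝ) < (2:ℝ) ^ (n - m) := two_zpow_pos _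
  have key : (2:ℝ) ^ (m - n) * (2:ℝ) ^ (n - m) = 1 := by
    rw [← zpow_add₀ (by norm_num : (2:ℝ) ≠ 0)]; norm_num
  have hxm : x * 2 ^ n = (x * 2 ^ m) * 2 ^ (n - m) := by
    rw [mul_assoc, ← zpow_add₀ (by norm_num : (2:ℝ) ≠ 0)]; ring_nf
  constructor
  · have h1 : ((l:ℝ) * (q:ℝ)) ≤ x * 2 ^ m := le_trans (by exact_mod_cast hk1) hx.1
    have h2 := mul_le_mul_of_nonneg_right h1 hpow.le
    rw [hxm]
    calc (l:ℝ) = (l:ℝ) * ((q:ℝ) * 2 ^ (n - m)) := by rw [hqr, key, mul_one]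
    _ = ((l:ℝ) * (q:ℝ)) * 2 ^ (n - m) := by ring
    _ ≤ (x * 2 ^ m) * 2 ^ (n - m) := h2
  · have h1 : x * 2 ^ m < ((l:ℝ) + 1) * (q:ℝ) := by
      refine lt_of_lt_of_le hx.2 ?_
      exact_mod_cast hk2
    have h2 := mul_lt_mul_of_pos_right h1 hpow
    rw [hxm]
    calc (x * 2 ^ m) * 2 ^ (n - m) < (((l:ℝ) + 1) * (q:ℝ)) * 2 ^ (n - m) := h2
    _ = ((l:ℝ) + 1) * ((q:ℝ) * 2 ^ (n - m)) := by ring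
    _ = (l:ℝ) + 1 := by rw [hqr, key, mul_one]


lemma zpow_succ_mul (n : ℤ) (x : ℝ) : x * (2:ℝ) ^ (n + 1) = 2 * (x * 2 ^ n) := by
  rw [zpow_add_one₀ (by norm_num : (2:ℝ) ≠ 0)]; ring

lemma D_union (n k : ℤ) : D (n + 1) (2 * k) ∪ D (n + 1) (2 * k + 1) = D n k := by
  ext x
  simp only [mem_union, mem_D_iff, zpow_succ_mul]
  push_cast
  constructor
  · rintro (⟨h1, h2⟩ | ⟨h1, h2⟩) <;> constructor <;> linarith
  · rintro ⟨h1, h2⟩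
    rcases le_or_gt ((2:ℝ) * (k:ℝ) + 1) (2 * (x * 2 ^ n)) with h | h
    · right; exact ⟨h, by linarith⟩
    · left; exact ⟨by linarith, h⟩

lemma D_left_subset (n k : ℤ) : D (n + 1) (2 * k) ⊆ D n k :=
  (D_union n k) ▸ subset_union_left

lemma D_right_subset (n k : ℤ) : D (n + 1) (2 * k + 1) ⊆ D n k :=
  (D_union n k) ▸ subset_union_right

/-- The indicator of a dyadic interval as an element of `L²`. -/
noncomputable def indD (n k : ℤ) : Lp ℝ 2 (volume : Measure ℝ) :=
  indicatorConstLp 2 (measurableSet_D n k) (volume_D_ne_top n k) (1 : ℝ)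

lemma inner_indD_left (n k : ℤ) (f : Lp ℝ 2 (volume : Measure ℝ)) :
    (inner ℝ (indD n k) f : ℝ) = ∫ x in D n k, f x := by
  rw [indD, L2.inner_indicatorConstLp_eq_setIntegral_inner]
  simp [RCLike.inner_apply]

lemma integrableOn_D (f : Lp ℝ 2 (volume : Measure ℝ)) (n k : ℤ) :
    IntegrableOn (f : ℝ → ℝ) (D n k) volume :=
  integrableOn_Lp_of_measure_ne_top f fact_one_le_two_ennreal.elim (volume_D_ne_top n k)

lemma inner_indD_indD (n k n' k' : ℤ) :
    (inner ℝ (indD n k) (indD n' k') : ℝ) = (volume (D n k ∩ D n' k')).toReal := by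
  rw [inner_indD_left]
  have hcong : ∫ x in D n k, (indD n' k' : ℝ → ℝ) x
      = ∫ x in D n k, (D n' k').indicator (fun _ => (1:ℝ)) x := by
    refine setIntegral_congr_ae (measurableSet_D n k) ?_
    filter_upwards [indicatorConstLp_coeFn (p := 2) (μ := (volume : Measure ℝ))
      (hs := measurableSet_D n' k') (hμs := volume_D_ne_top n' k') (c := (1:ℝ))] with x hx _
    exact hx
  rw [hcong, setIntegral_indicator (measurableSet_D n' k'), setIntegral_const]
  simp
  rfl


lemma haar_eq_indicator (i j : ℤ) (x : ℝ) :
    haarWavelet i j x = (2:ℝ) ^ ((i:ℝ)/2) *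
      ((D (i+1) (2*j)).indicator (fun _ => (1:ℝ)) x
        - (D (i+1) (2*j+1)).indicator (fun _ => (1:ℝ)) x) := by
  have hy : ∀ k : ℤ, x ∈ D (i+1) k ↔ ((k:ℝ) ≤ 2 * ((2:ℝ)^i * x) ∧ 2 * ((2:ℝ)^i * x) < (k:ℝ) + 1) := by
    intro k
    rw [mem_D_iff, zpow_succ_mul]
    constructor <;> rintro ⟨h1, h2⟩ <;> constructor <;> linarith [mul_comm x ((2:ℝ)^i)]
  rw [haarWavelet, haarMother]
  congr 1
  set y : ℝ := (2:ℝ)^i * x with hydef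
  by_cases hA : x ∈ D (i+1) (2*j)
  · have h := (hy (2*j)).mp hA
    push_cast at h
    have hcond : 0 ≤ y - (j:ℝ) ∧ y - (j:ℝ) < 1/2 := by constructor <;> linarith
    have hB : x ∉ D (i+1) (2*j+1) := by
      rw [hy]
      push_cast
      rintro ⟨h1, _⟩
      linarith [hcond.2]
    rw [if_pos hcond, indicator_of_mem hA, indicator_of_notMem hB]
    norm_num
  · by_cases hB : x ∈ D (i+1) (2*j+1)
    · have h := (hy (2*j+1)).mp hB
      push_cast at h
      have hcond2 : 1/2 ≤ y - (j:ℝ) ∧ y - (j:ℝ) < 1 := by constructor <;> linarith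
      have hcond : ¬ (0 ≤ y - (j:ℝ) ∧ y - (j:ℝ) < 1/2) := by
        rintro ⟨_, h2⟩; linarith [hcond2.1]
      rw [if_neg hcond, if_pos hcond2, indicator_of_notMem hA, indicator_of_mem hB]
      norm_num
    · have hA' := hA; have hB' := hB
      rw [hy] at hA' hB'
      push_cast at hA' hB'
      have h1 : ¬ (0 ≤ y - (j:ℝ) ∧ y - (j:ℝ) < 1/2) := by
        rintro ⟨u1, u2⟩; exact hA' ⟨by linarith, by linarith⟩
      have h2 : ¬ ((1:ℝ)/2 ≤ y - (j:ℝ) ∧ y - (j:ℝ) < 1) := by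
        rintro ⟨u1, u2⟩; exact hB' ⟨by linarith, by linarith⟩
      rw [if_neg h1, if_neg h2, indicator_of_notMem hA, indicator_of_notMem hB]
      norm_num

lemma F_decomp (F : ℤ × ℤ → Lp ℝ 2 (volume : Measure ℝ))
    (hF : ∀ p : ℤ × ℤ, (F p : ℝ → ℝ) =ᵐ[volume] haarWavelet p.1 p.2) (i j : ℤ) :
    F (i, j) = (2:ℝ) ^ ((i:ℝ)/2) • (indD (i+1) (2*j) - indD (i+1) (2*j+1)) := by
  apply Lp.ext
  have h1 := hF (i, j)
  have h2 := Lp.coeFn_smul ((2:ℝ) ^ ((i:ℝ)/2)) (indD (i+1) (2*j) - indD (i+1) (2*j+1))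
  have h3 := Lp.coeFn_sub (indD (i+1) (2*j)) (indD (i+1) (2*j+1))
  have h4 := indicatorConstLp_coeFn (p := 2) (μ := (volume : Measure ℝ))
      (hs := measurableSet_D (i+1) (2*j)) (hμs := volume_D_ne_top (i+1) (2*j)) (c := (1:ℝ))
  have h5 := indicatorConstLp_coeFn (p := 2) (μ := (volume : Measure ℝ))
      (hs := measurableSet_D (i+1) (2*j+1)) (hμs := volume_D_ne_top (i+1) (2*j+1)) (c := (1:ℝ))
  filter_upwards [h1, h2, h3, h4, h5] with x e1 e2 e3 e4 e5
  rw [e1, e2]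
  simp only [Pi.smul_apply, smul_eq_mul]
  rw [e3]
  simp only [Pi.sub_apply]
  simp only [indD]
  rw [e4, e5, haar_eq_indicator]


lemma vol_inter_zero {A : Set ℝ} {n a b : ℤ} (h : a ≠ b) (hA : A ⊆ D n b) :
    volume (D n a ∩ A) = 0 :=
  measure_mono_null (inter_subset_inter_right _ hA) (by rw [D_disjoint h]; simp)

lemma volume_D_toReal (n k : ℤ) : (volume (D n k)).toReal = (2:ℝ) ^ (-n) := by
  rw [volume_D, ENNReal.toReal_ofReal (two_zpow_pos (-n)).le]

lemma bracket_zero (i j i' j' : ℤ) (hii' : i ≤ i') (hne : (i, j) ≠ (i', j')) :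
    (volume (D (i+1) (2*j) ∩ D (i'+1) (2*j'))).toReal
      - (volume (D (i+1) (2*j) ∩ D (i'+1) (2*j'+1))).toReal
      - (volume (D (i+1) (2*j+1) ∩ D (i'+1) (2*j'))).toReal
      + (volume (D (i+1) (2*j+1) ∩ D (i'+1) (2*j'+1))).toReal = 0 := by
  rcases eq_or_lt_of_le hii' with rfl | hlt
  · -- same scale, different translation
    have hjj : j ≠ j' := fun h => hne (by rw [h])
    have e1 : (2*j : ℤ) ≠ 2*j' := by omega
    have e2 : (2*j : ℤ) ≠ 2*j'+1 := by omega
    have e3 : (2*j+1 : ℤ) ≠ 2*j' := by omega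
    have e4 : (2*j+1 : ℤ) ≠ 2*j'+1 := by omega
    rw [D_disjoint e1, D_disjoint e2, D_disjoint e3, D_disjoint e4]
    simp
  · have hsc : i + 1 ≤ i' := by omega
    set l₀ : ℤ := j' / 2 ^ ((i' - (i+1)).toNat) with hl₀
    have hsub : D i' j' ⊆ D (i+1) l₀ := D_subset hsc j'
    have hL' : D (i'+1) (2*j') ⊆ D (i+1) l₀ := (D_left_subset i' j').trans hsub
    have hR' : D (i'+1) (2*j'+1) ⊆ D (i+1) l₀ := (D_right_subset i' j').trans hsub
    by_cases h1 : l₀ = 2*j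
    · have hLL : D (i+1) (2*j) ∩ D (i'+1) (2*j') = D (i'+1) (2*j') :=
        inter_eq_self_of_subset_right (h1 ▸ hL')
      have hLR : D (i+1) (2*j) ∩ D (i'+1) (2*j'+1) = D (i'+1) (2*j'+1) :=
        inter_eq_self_of_subset_right (h1 ▸ hR')
      have hRL : volume (D (i+1) (2*j+1) ∩ D (i'+1) (2*j')) = 0 :=
        vol_inter_zero (by omega) (h1 ▸ hL')
      have hRR : volume (D (i+1) (2*j+1) ∩ D (i'+1) (2*j'+1)) = 0 :=
        vol_inter_zero (by omega) (h1 ▸ hR')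
      rw [hLL, hLR, hRL, hRR, volume_D_toReal, volume_D_toReal]
      simp
    · by_cases h2 : l₀ = 2*j+1
      · have hLL : volume (D (i+1) (2*j) ∩ D (i'+1) (2*j')) = 0 :=
          vol_inter_zero (by omega) (h2 ▸ hL')
        have hLR : volume (D (i+1) (2*j) ∩ D (i'+1) (2*j'+1)) = 0 :=
          vol_inter_zero (by omega) (h2 ▸ hR')
        have hRL : D (i+1) (2*j+1) ∩ D (i'+1) (2*j') = D (i'+1) (2*j') :=
          inter_eq_self_of_subset_right (h2 ▸ hL')
        have hRR : D (i+1) (2*j+1) ∩ D (i'+1) (2*j'+1) = D (i'+1) (2*j'+1) :=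
          inter_eq_self_of_subset_right (h2 ▸ hR')
        rw [hLL, hLR, hRL, hRR, volume_D_toReal, volume_D_toReal]
        simp
      · have hLL : volume (D (i+1) (2*j) ∩ D (i'+1) (2*j')) = 0 :=
          vol_inter_zero (fun h => h1 h.symm) hL'
        have hLR : volume (D (i+1) (2*j) ∩ D (i'+1) (2*j'+1)) = 0 :=
          vol_inter_zero (fun h => h1 h.symm) hR'
        have hRL : volume (D (i+1) (2*j+1) ∩ D (i'+1) (2*j')) = 0 :=
          vol_inter_zero (fun h => h2 h.symm) hL'
        have hRR : volume (D (i+1) (2*j+1) ∩ D (i'+1) (2*j'+1)) = 0 :=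
          vol_inter_zero (fun h => h2 h.symm) hR'
        rw [hLL, hLR, hRL, hRR]
        simp

lemma inner_F (F : ℤ × ℤ → Lp ℝ 2 (volume : Measure ℝ))
    (hF : ∀ p : ℤ × ℤ, (F p : ℝ → ℝ) =ᵐ[volume] haarWavelet p.1 p.2) (i j i' j' : ℤ) :
    (inner ℝ (F (i, j)) (F (i', j')) : ℝ) = (2:ℝ) ^ ((i:ℝ)/2) * (2:ℝ) ^ ((i':ℝ)/2) *
      ((volume (D (i+1) (2*j) ∩ D (i'+1) (2*j'))).toReal
        - (volume (D (i+1) (2*j) ∩ D (i'+1) (2*j'+1))).toReal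
        - (volume (D (i+1) (2*j+1) ∩ D (i'+1) (2*j'))).toReal
        + (volume (D (i+1) (2*j+1) ∩ D (i'+1) (2*j'+1))).toReal) := by
  rw [F_decomp F hF i j, F_decomp F hF i' j']
  simp only [inner_smul_left, inner_smul_right, inner_sub_left, inner_sub_right,
    inner_indD_indD, conj_trivial]
  ring

lemma orthonormal_haar (F : ℤ × ℤ → Lp ℝ 2 (volume : Measure ℝ))
    (hF : ∀ p : ℤ × ℤ, (F p : ℝ → ℝ) =ᵐ[volume] haarWavelet p.1 p.2) :
    Orthonormal ℝ F := by
  rw [orthonormal_iff_ite]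
  rintro ⟨i, j⟩ ⟨i', j'⟩
  by_cases hpq : ((i, j) : ℤ × ℤ) = (i', j')
  · obtain ⟨rfl, rfl⟩ := Prod.mk.injEq .. ▸ Prod.ext_iff.mp hpq
    rw [if_pos rfl, inner_F F hF]
    rw [inter_self, inter_self, D_disjoint (show (2*j : ℤ) ≠ 2*j+1 by omega),
      D_disjoint (show (2*j+1 : ℤ) ≠ 2*j by omega), volume_D_toReal, volume_D_toReal]
    have e1 : (2:ℝ) ^ ((i:ℝ)/2) * (2:ℝ) ^ ((i:ℝ)/2) = (2:ℝ) ^ (i : ℤ) := by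
      rw [← Real.rpow_add two_pos, show (i:ℝ)/2 + (i:ℝ)/2 = ((i : ℤ) : ℝ) by push_cast; ring,
        Real.rpow_intCast]
    simp only [measure_empty, ENNReal.toReal_zero, sub_zero]
    rw [e1, show (2:ℝ) ^ (-(i+1) : ℤ) + (2:ℝ) ^ (-(i+1) : ℤ)
        = (2:ℝ) ^ (-(i+1) + 1 : ℤ) by
      rw [zpow_add_one₀ (by norm_num : (2:ℝ) ≠ 0)]; ring]
    rw [← zpow_add₀ (by norm_num : (2:ℝ) ≠ 0)]
    norm_num
  · rw [if_neg hpq]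
    rcases le_total i i' with h | h
    · rw [inner_F F hF, bracket_zero i j i' j' h hpq]; ring
    · rw [real_inner_comm, inner_F F hF, bracket_zero i' j' i j h (Ne.symm hpq)]; ring


lemma abs_setIntegral_le (f : Lp ℝ 2 (volume : Measure ℝ)) {s : Set ℝ}
    (hs : MeasurableSet s) (hμs : volume s ≠ ⊤) :
    |∫ x in s, f x| ≤ ‖f‖ * (volume s).toReal ^ ((1:ℝ)/2) := by
  have h := L2.inner_indicatorConstLp_eq_setIntegral_inner (𝕜 := ℝ) f hs (1:ℝ) hμs
  simp only [RCLike.inner_apply, conj_trivial, one_mul, mul_one] at h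
  rw [← h]
  have hb := abs_real_inner_le_norm (indicatorConstLp 2 hs hμs (1:ℝ)) f
  have hn : ‖indicatorConstLp 2 hs hμs (1:ℝ)‖ = (volume s).toReal ^ ((1:ℝ)/2) := by
    rw [norm_indicatorConstLp (by norm_num) (by norm_num)]
    norm_num
    rfl
  rw [hn] at hb
  calc |inner ℝ (indicatorConstLp 2 hs hμs (1:ℝ)) f|
      ≤ (volume s).toReal ^ ((1:ℝ)/2) * ‖f‖ := hb
    _ = ‖f‖ * (volume s).toReal ^ ((1:ℝ)/2) := by ring

lemma eq_zero_of_abs_le_geo {x C r : ℝ} (hr0 : 0 ≤ r) (hr1 : r < 1)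
    (h : ∀ m : ℕ, |x| ≤ C * r ^ m) : x = 0 := by
  have h0 : Filter.Tendsto (fun m : ℕ => C * r ^ m) Filter.atTop (nhds (C * 0)) :=
    Filter.Tendsto.const_mul C (tendsto_pow_atTop_nhds_zero_of_lt_one hr0 hr1)
  rw [mul_zero] at h0
  have := ge_of_tendsto' h0 h
  exact abs_eq_zero.mp (le_antisymm this (abs_nonneg x))


section Vanish

variable (f : Lp ℝ 2 (volume : Measure ℝ))

lemma setIntegral_D_split (n k : ℤ) :
    ∫ x in D n k, f x = (∫ x in D (n+1) (2*k), f x) + ∫ x in D (n+1) (2*k+1), f x := by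
  rw [← D_union n k]
  exact setIntegral_union
    (Set.disjoint_iff_inter_eq_empty.mpr (D_disjoint (by omega)))
    (measurableSet_D _ _) (integrableOn_D f _ _) (integrableOn_D f _ _)


lemma integrableOn_Ico (a b : ℝ) : IntegrableOn (f : ℝ → ℝ) (Ico a b) volume :=
  integrableOn_Lp_of_measure_ne_top f fact_one_le_two_ennreal.elim
    (by rw [Real.volume_Ico]; exact ENNReal.ofReal_ne_top)

variable (hhalves : ∀ n k : ℤ, ∫ x in D (n+1) (2*k), f x = ∫ x in D (n+1) (2*k+1), f x)
include hhalves

lemma step_left (n k : ℤ) :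
    ∫ x in D (n+1) (2*k), f x = (1/2) * ∫ x in D n k, f x := by
  have h := setIntegral_D_split f n k
  rw [← hhalves n k] at h
  linarith

lemma step_right (n k : ℤ) :
    ∫ x in D (n+1) (2*k+1), f x = (1/2) * ∫ x in D n k, f x := by
  rw [← hhalves n k]; exact step_left f hhalves n k

lemma iter_coarse : ∀ m : ℕ, ∀ n k : ℤ, ∃ k' : ℤ,
    ∫ x in D n k, f x = (1/2) ^ m * ∫ x in D (n - m) k', f x := by
  intro m
  induction m with
  | zero => exact fun n k => ⟨k, by simp⟩
  | succ m ih =>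
    intro n k
    have hone : ∃ k₁ : ℤ, ∫ x in D n k, f x = (1/2) * ∫ x in D (n-1) k₁, f x := by
      rcases Int.even_or_odd k with ⟨c, hc⟩ | ⟨c, hc⟩
      · refine ⟨c, ?_⟩
        have h := step_left f hhalves (n-1) c
        rw [sub_add_cancel, show 2*c = k by omega] at h
        exact h
      · refine ⟨c, ?_⟩
        have h := step_right f hhalves (n-1) c
        rw [sub_add_cancel, show 2*c+1 = k by omega] at h
        exact h
    obtain ⟨k₁, h1⟩ := hone
    obtain ⟨k', h2⟩ := ih (n-1) k₁
    refine ⟨k', ?_⟩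
    rw [h1, h2, show n - 1 - (m:ℤ) = n - ((m+1 : ℕ) : ℤ) by push_cast; ring]
    ring

lemma setIntegral_D_zero (n k : ℤ) : ∫ x in D n k, f x = 0 := by
  set r : ℝ := (2:ℝ) ^ (-(1:ℝ)/2) with hr
  have hr0 : 0 ≤ r := (Real.rpow_pos_of_pos two_pos _).le
  have hr1 : r < 1 := Real.rpow_lt_one_of_one_lt_of_neg one_lt_two (by norm_num)
  refine eq_zero_of_abs_le_geo (C := ‖f‖ * (2:ℝ) ^ (-(n:ℝ)/2)) hr0 hr1 ?_
  intro m
  obtain ⟨k', h⟩ := iter_coarse f hhalves m n k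
  rw [h, abs_mul, abs_of_nonneg (by positivity : (0:ℝ) ≤ ((1:ℝ)/2) ^ m)]
  have hb := abs_setIntegral_le f (measurableSet_D (n - m) k') (volume_D_ne_top _ _)
  rw [volume_D_toReal] at hb
  calc ((1:ℝ)/2) ^ m * |∫ x in D (n - m) k', f x|
      ≤ ((1:ℝ)/2) ^ m * (‖f‖ * ((2:ℝ) ^ (-(n - (m:ℤ)))) ^ ((1:ℝ)/2)) := by
        exact mul_le_mul_of_nonneg_left hb (by positivity)
    _ = ‖f‖ * (2:ℝ) ^ (-(n:ℝ)/2) * r ^ m := by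
        have e1 : ((1:ℝ)/2) ^ m = (2:ℝ) ^ (-(m:ℝ)) := by
          rw [one_div, inv_pow, ← Real.rpow_natCast 2 m, ← Real.rpow_neg two_pos.le]
        have e2 : ((2:ℝ) ^ (-(n - (m:ℤ)))) ^ ((1:ℝ)/2)
            = (2:ℝ) ^ (((-(n - (m:ℤ)) : ℤ):ℝ) * (1/2)) := by
          rw [show ((2:ℝ) ^ (-(n - (m:ℤ)) : ℤ)) = (2:ℝ) ^ ((-(n - (m:ℤ)) : ℤ) : ℝ) from
            (Real.rpow_intCast 2 _).symm, ← Real.rpow_mul two_pos.le]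
        have e3 : r ^ m = (2:ℝ) ^ ((-1/2 : ℝ) * m) := by
          rw [hr, ← Real.rpow_natCast _ m, ← Real.rpow_mul two_pos.le]
        rw [e1, e2, e3]
        rw [show (2:ℝ) ^ (-(m:ℝ)) * (‖f‖ * (2:ℝ) ^ (((-(n - (m:ℤ)) : ℤ):ℝ) * (1/2)))
            = ‖f‖ * ((2:ℝ) ^ (-(m:ℝ)) * (2:ℝ) ^ (((-(n - (m:ℤ)) : ℤ):ℝ) * (1/2))) from by ring]
        rw [mul_assoc (‖f‖), ← Real.rpow_add two_pos, ← Real.rpow_add two_pos]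
        congr 1
        push_cast
        ring


lemma setIntegral_consec (n : ℤ) : ∀ k k' : ℤ, k ≤ k' →
    ∫ x in Ico ((k:ℝ) * 2^(-n)) ((k':ℝ) * 2^(-n)), f x = 0 := by
  intro k
  refine Int.le_induction ?_ ?_
  · simp [Set.Ico_self]
  · intro k' hk ih
    have hmono : ∀ a b : ℤ, a ≤ b → ((a:ℝ) * 2^(-n)) ≤ (b:ℝ) * 2^(-n) := fun a b hab =>
      mul_le_mul_of_nonneg_right (by exact_mod_cast hab) (two_zpow_pos (-n)).le
    rw [show (((k'+1 : ℤ)):ℝ) * 2^(-n) = ((k':ℝ) + 1) * 2^(-n) by push_cast; ring]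
    rw [← Set.Ico_union_Ico_eq_Ico (hmono k k' hk)
      (mul_le_mul_of_nonneg_right (by linarith : (k':ℝ) ≤ (k':ℝ) + 1) (two_zpow_pos (-n)).le)]
    rw [setIntegral_union (Set.Ico_disjoint_Ico_same) measurableSet_Ico
      (integrableOn_Ico f _ _) (integrableOn_Ico f _ _), ih]
    have hD := setIntegral_D_zero f hhalves n k'
    rw [D] at hD
    rw [hD, add_zero]

lemma setIntegral_Ico_zero (a b : ℝ) (hab : a ≤ b) : ∫ x in Ico a b, f x = 0 := by
  set r : ℝ := (2:ℝ) ^ ((-1:ℝ)/2) with hr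
  have hr0 : 0 ≤ r := (Real.rpow_pos_of_pos two_pos _).le
  have hr1 : r < 1 := Real.rpow_lt_one_of_one_lt_of_neg one_lt_two (by norm_num)
  refine eq_zero_of_abs_le_geo (C := 2 * ‖f‖) hr0 hr1 ?_
  intro m
  set n : ℤ := (m : ℤ) with hn
  have hkey : ∀ y : ℝ, y * 2^(n:ℤ) * 2^(-n : ℤ) = y := fun y => by
    rw [mul_assoc, ← zpow_add₀ (by norm_num : (2:ℝ) ≠ 0)]; simp
  have hpow := two_zpow_pos (-n)
  have hpown := two_zpow_pos n
  set c : ℝ := (⌈a * 2^(n:ℤ)⌉ : ℝ) * 2^(-n : ℤ) with hc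
  set d : ℝ := (⌈b * 2^(n:ℤ)⌉ : ℝ) * 2^(-n : ℤ) with hd
  have hac : a ≤ c := by
    have := Int.le_ceil (a * 2^(n:ℤ))
    calc a = a * 2^(n:ℤ) * 2^(-n:ℤ) := (hkey a).symm
    _ ≤ (⌈a * 2^(n:ℤ)⌉ : ℝ) * 2^(-n:ℤ) := mul_le_mul_of_nonneg_right this hpow.le
  have hca : c ≤ a + 2^(-n:ℤ) := by
    have h1 : (⌈a * 2^(n:ℤ)⌉ : ℝ) ≤ a * 2^(n:ℤ) + 1 := (Int.ceil_lt_add_one _).le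
    calc c ≤ (a * 2^(n:ℤ) + 1) * 2^(-n:ℤ) := mul_le_mul_of_nonneg_right h1 hpow.le
    _ = a + 2^(-n:ℤ) := by rw [add_mul, hkey a, one_mul]
  have hbd : b ≤ d := by
    have := Int.le_ceil (b * 2^(n:ℤ))
    calc b = b * 2^(n:ℤ) * 2^(-n:ℤ) := (hkey b).symm
    _ ≤ (⌈b * 2^(n:ℤ)⌉ : ℝ) * 2^(-n:ℤ) := mul_le_mul_of_nonneg_right this hpow.le
  have hdb : d ≤ b + 2^(-n:ℤ) := by
    have h1 : (⌈b * 2^(n:ℤ)⌉ : ℝ) ≤ b * 2^(n:ℤ) + 1 := (Int.ceil_lt_add_one _).le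
    calc d ≤ (b * 2^(n:ℤ) + 1) * 2^(-n:ℤ) := mul_le_mul_of_nonneg_right h1 hpow.le
    _ = b + 2^(-n:ℤ) := by rw [add_mul, hkey b, one_mul]
  have hceil : (⌈a * 2^(n:ℤ)⌉ : ℤ) ≤ ⌈b * 2^(n:ℤ)⌉ :=
    Int.ceil_le_ceil (mul_le_mul_of_nonneg_right hab hpown.le)
  have hcd : c ≤ d := mul_le_mul_of_nonneg_right (by exact_mod_cast hceil) hpow.le
  have hcd0 : ∫ x in Ico c d, f x = 0 := setIntegral_consec f hhalves n _ _ hceil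
  have had1 : ∫ x in Ico a d, f x = (∫ x in Ico a b, f x) + ∫ x in Ico b d, f x := by
    rw [← Set.Ico_union_Ico_eq_Ico hab hbd,
      setIntegral_union (Set.Ico_disjoint_Ico_same) measurableSet_Ico
        (integrableOn_Ico f _ _) (integrableOn_Ico f _ _)]
  have had2 : ∫ x in Ico a d, f x = (∫ x in Ico a c, f x) + ∫ x in Ico c d, f x := by
    rw [← Set.Ico_union_Ico_eq_Ico hac hcd,
      setIntegral_union (Set.Ico_disjoint_Ico_same) measurableSet_Ico
        (integrableOn_Ico f _ _) (integrableOn_Ico f _ _)]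
  have hmain : ∫ x in Ico a b, f x = (∫ x in Ico a c, f x) - ∫ x in Ico b d, f x := by
    rw [hcd0, add_zero] at had2
    linarith
  have hX : ((2:ℝ) ^ (-n:ℤ)) ^ ((1:ℝ)/2) = r ^ m := by
    rw [hr, show ((2:ℝ) ^ (-n:ℤ)) = (2:ℝ) ^ ((-n:ℤ):ℝ) from (Real.rpow_intCast 2 _).symm,
      ← Real.rpow_natCast ((2:ℝ) ^ ((-1:ℝ)/2)) m, ← Real.rpow_mul two_pos.le,
      ← Real.rpow_mul two_pos.le]
    congr 1
    rw [hn]; push_cast; ring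
  have hbound : ∀ u v : ℝ, u ≤ v → v ≤ u + 2^(-n:ℤ) →
      |∫ x in Ico u v, f x| ≤ ‖f‖ * r ^ m := by
    intro u v huv hvu
    have h1 := abs_setIntegral_le f (measurableSet_Ico (a := u) (b := v))
      (by rw [Real.volume_Ico]; exact ENNReal.ofReal_ne_top)
    rw [Real.volume_Ico, ENNReal.toReal_ofReal (by linarith)] at h1
    refine h1.trans ?_
    rw [← hX]
    refine mul_le_mul_of_nonneg_left ?_ (norm_nonneg f)
    exact Real.rpow_le_rpow (by linarith) (by linarith) (by norm_num)
  rw [hmain]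
  calc |(∫ x in Ico a c, f x) - ∫ x in Ico b d, f x|
      ≤ |∫ x in Ico a c, f x| + |∫ x in Ico b d, f x| := abs_sub _ _
    _ ≤ ‖f‖ * r ^ m + ‖f‖ * r ^ m := add_le_add (hbound a c hac hca) (hbound b d hbd hdb)
    _ = 2 * ‖f‖ * r ^ m := by ring

end Vanish

lemma setIntegral_zero_of_Ico (f : Lp ℝ 2 (volume : Measure ℝ))
    (hIco : ∀ a b : ℝ, a ≤ b → ∫ x in Ico a b, f x = 0)
    {s : Set ℝ} (hs : MeasurableSet s) (hμs : volume s < ⊤) :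
    ∫ x in s, f x = 0 := by
  classical
  have hIco' : ∀ a b : ℝ, ∫ x in Ico a b, f x = 0 := by
    intro a b
    rcases le_total a b with h | h
    · exact hIco a b h
    · rw [Set.Ico_eq_empty (not_lt.mpr h)]
      simp
  set fp : ℝ → ℝ := fun x => max ((f : ℝ → ℝ) x) 0 with hfp
  set fm : ℝ → ℝ := fun x => max (-((f : ℝ → ℝ) x)) 0 with hfm
  have hpm : ∀ x, fp x - fm x = (f : ℝ → ℝ) x := by
    intro x
    rcases le_total ((f : ℝ → ℝ) x) 0 with h | h
    · rw [hfp, hfm]; simp only; rw [max_eq_right h, max_eq_left (by linarith)]; ring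
    · rw [hfp, hfm]; simp only; rw [max_eq_left h, max_eq_right (by linarith)]; ring
  have oR : ∀ y : ℝ, ENNReal.ofReal y = ENNReal.ofReal (max y 0) := by
    intro y
    rcases le_total y 0 with h | h
    · rw [ENNReal.ofReal_eq_zero.mpr h, max_eq_right h, ENNReal.ofReal_zero]
    · rw [max_eq_left h]
  have key : ∀ N : ℕ, ∫ x in s ∩ Ico (-(N:ℝ)) (N:ℝ), f x = 0 := by
    intro N
    set J : Set ℝ := Ico (-(N:ℝ)) (N:ℝ) with hJ
    have hfJ : IntegrableOn (f : ℝ → ℝ) J volume := integrableOn_Ico f _ _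
    have hIOn : ∀ t : Set ℝ, IntegrableOn (f : ℝ → ℝ) (t ∩ J) volume :=
      fun t => hfJ.mono_set inter_subset_right
    have hdiff : ∀ u : Set ℝ, IntegrableOn (f : ℝ → ℝ) u volume →
        (∫ x in u, fp x) - (∫ x in u, fm x) = ∫ x in u, (f : ℝ → ℝ) x := by
      intro u hu
      have hsub := integral_sub hu.pos_part hu.neg.pos_part
      simp only [Pi.neg_apply] at hsub
      have hgoal : (∫ x in u, max ((f : ℝ → ℝ) x) 0) - (∫ x in u, max (-((f : ℝ → ℝ) x)) 0)
          = ∫ x in u, (f : ℝ → ℝ) x := by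
        rw [← hsub]
        refine integral_congr_ae (Filter.Eventually.of_forall fun x => ?_)
        exact hpm x
      exact hgoal
    set μp : Measure ℝ := (volume.restrict J).withDensity
      (fun x => ENNReal.ofReal ((f : ℝ → ℝ) x)) with hμp
    set μm : Measure ℝ := (volume.restrict J).withDensity
      (fun x => ENNReal.ofReal (-((f : ℝ → ℝ) x))) with hμm
    have hval : ∀ t : Set ℝ, MeasurableSet t →
        μp t = ENNReal.ofReal (∫ x in t ∩ J, fp x)
          ∧ μm t = ENNReal.ofReal (∫ x in t ∩ J, fm x) := by
      intro t ht
      have hres : (volume.restrict J).restrict t = volume.restrict (t ∩ J) :=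
        Measure.restrict_restrict ht
      constructor
      · rw [hμp, withDensity_apply _ ht, hres]
        have h1 : ∫⁻ x in t ∩ J, ENNReal.ofReal ((f : ℝ → ℝ) x)
            = ∫⁻ x in t ∩ J, ENNReal.ofReal (fp x) := by
          exact lintegral_congr fun x => oR _
        rw [h1, ← ofReal_integral_eq_lintegral_ofReal (hIOn t).pos_part
          (Filter.Eventually.of_forall fun x => le_max_right _ _)]
      · rw [hμm, withDensity_apply _ ht, hres]
        have h1 : ∫⁻ x in t ∩ J, ENNReal.ofReal (-((f : ℝ → ℝ) x))
            = ∫⁻ x in t ∩ J, ENNReal.ofReal (fm x) := by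
          exact lintegral_congr fun x => oR _
        have h2 := ofReal_integral_eq_lintegral_ofReal (μ := volume.restrict (t ∩ J))
          (hIOn t).neg.pos_part (Filter.Eventually.of_forall fun x => le_max_right _ _)
        simp only [Pi.neg_apply] at h2
        rw [h1, ← h2]
    have hfin : IsFiniteMeasure μp := by
      constructor
      rw [(hval univ MeasurableSet.univ).1]
      exact ENNReal.ofReal_lt_top
    have heq : ∀ t : Set ℝ, MeasurableSet t → (∫ x in t ∩ J, (f : ℝ → ℝ) x) = 0 → μp t = μm t := by
      intro t ht h0
      rw [(hval t ht).1, (hval t ht).2]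
      congr 1
      have := hdiff (t ∩ J) (hIOn t)
      rw [h0] at this
      linarith
    have hIcoJ : ∀ a b : ℝ, ∃ a' b', Ico a b ∩ J = Ico a' b' := by
      intro a b
      exact ⟨max a (-(N:ℝ)), min b (N:ℝ), Set.Ico_inter_Ico⟩
    have hext : μp = μm := by
      refine Measure.ext_of_Ico_finite μp μm ?_ ?_
      · refine heq univ MeasurableSet.univ ?_
        rw [univ_inter, hJ]
        exact hIco' _ _
      · intro a b _
        refine heq (Ico a b) measurableSet_Ico ?_
        obtain ⟨a', b', hab⟩ := hIcoJ a b
        rw [hab]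
        exact hIco' _ _
    have hps : μp s = μm s := by rw [hext]
    rw [(hval s hs).1, (hval s hs).2] at hps
    have hnn1 : (0:ℝ) ≤ ∫ x in s ∩ J, fp x := integral_nonneg fun x => le_max_right _ _
    have hnn2 : (0:ℝ) ≤ ∫ x in s ∩ J, fm x := integral_nonneg fun x => le_max_right _ _
    rw [ENNReal.ofReal_eq_ofReal_iff hnn1 hnn2] at hps
    have := hdiff (s ∩ J) (hIOn s)
    rw [← this, hps]
    ring
  have hmono : Monotone (fun N : ℕ => s ∩ Ico (-(N:ℝ)) (N:ℝ)) := by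
    intro N M h
    refine inter_subset_inter_right s (Ico_subset_Ico ?_ ?_)
    · exact neg_le_neg (by exact_mod_cast h)
    · exact_mod_cast h
  have hunion : ⋃ N : ℕ, (s ∩ Ico (-(N:ℝ)) (N:ℝ)) = s := by
    ext x
    simp only [mem_iUnion, mem_inter_iff, mem_Ico]
    constructor
    · rintro ⟨N, hx, _⟩; exact hx
    · intro hx
      obtain ⟨N, hN⟩ := exists_nat_gt |x|
      exact ⟨N, hx, by rw [abs_lt] at hN; constructor <;> [linarith; linarith]⟩
  have hint : IntegrableOn (f : ℝ → ℝ) (⋃ N : ℕ, (s ∩ Ico (-(N:ℝ)) (N:ℝ))) volume := by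
    rw [hunion]
    exact integrableOn_Lp_of_measure_ne_top f fact_one_le_two_ennreal.elim hμs.ne
  have htend := tendsto_setIntegral_of_monotone
    (fun N : ℕ => hs.inter measurableSet_Ico) hmono hint
  rw [hunion] at htend
  have h0 : (fun N : ℕ => ∫ x in s ∩ Ico (-(N:ℝ)) (N:ℝ), f x) = fun _ => (0:ℝ) :=
    funext key
  rw [h0] at htend
  exact (tendsto_nhds_unique htend tendsto_const_nhds)

lemma density (F : ℤ × ℤ → Lp ℝ 2 (volume : Measure ℝ))
    (hF : ∀ p : ℤ × ℤ, (F p : ℝ → ℝ) =ᵐ[volume] haarWavelet p.1 p.2) :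
    (Submodule.span ℝ (Set.range F)).topologicalClosure = ⊤ := by
  rw [Submodule.topologicalClosure_eq_top_iff, Submodule.eq_bot_iff]
  intro f hf
  have horth : ∀ p : ℤ × ℤ, (inner ℝ (F p) f : ℝ) = 0 := fun p =>
    (Submodule.mem_orthogonal _ f).mp hf (F p) (Submodule.subset_span ⟨p, rfl⟩)
  have hhalves : ∀ n k : ℤ,
      ∫ x in D (n+1) (2*k), f x = ∫ x in D (n+1) (2*k+1), f x := by
    intro n k
    have h := horth (n, k)
    rw [F_decomp F hF n k, inner_smul_left, inner_sub_left, inner_indD_left, inner_indD_left,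
      conj_trivial] at h
    have hne : (2:ℝ) ^ ((n:ℝ)/2) ≠ 0 := (Real.rpow_pos_of_pos two_pos _).ne'
    rcases mul_eq_zero.mp h with h' | h'
    · exact absurd h' hne
    · linarith
  have hIcoZ : ∀ a b : ℝ, a ≤ b → ∫ x in Ico a b, f x = 0 :=
    fun a b hab => setIntegral_Ico_zero f hhalves a b hab
  have hae : (f : ℝ → ℝ) =ᵐ[volume] 0 := by
    refine Lp.ae_eq_zero_of_forall_setIntegral_eq_zero f (by norm_num) (by norm_num) ?_ ?_
    · exact fun t _ hμt =>
        integrableOn_Lp_of_measure_ne_top f fact_one_le_two_ennreal.elim hμt.ne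
    · exact fun t ht hμt => setIntegral_zero_of_Ico f hIcoZ ht hμt
  exact Lp.ext (hae.trans (Lp.coeFn_zero ℝ 2 volume).symm)

end HaarAux

theorem haar_family_hilbert_basis
    (F : ℤ × ℤ → Lp ℝ 2 (volume : Measure ℝ))
    (hF : ∀ p : ℤ × ℤ, (F p : ℝ → ℝ) =ᵐ[volume] haarWavelet p.1 p.2) :
    Orthonormal ℝ F ∧
      (Submodule.span ℝ (Set.range F)).topologicalClosure = ⊤ :=
  ⟨HaarAux.orthonormal_haar F hF, HaarAux.density F hF⟩

-- #print axioms haar_family_hilbert_basis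
end
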